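/- arXiv:2401.12374 — 6 statements merged into one kernel-verified Lean document; each statement's English description precedes it below -/
import Mathlib

section
/- Let f be a polynomial with complex coefficients, let r ∈ ℂ be a simple root of f (i.e. f(r) = 0 and f'(r) ≠ 0), and let α ∈ ℂ. Define g : ℂ → ℂ by g(z) = z − (1 + L(z)/(2·(1 − α·L(z))))·f(z)/f'(z), where L(z) = f(z)·f''(z)/f'(z)². Then g(r) = r, the derivative of g at r is 0, and the second derivative of g at r is 0. (Every simple root of a polynomial is a super-attracting fixed point of local degree at least 3 of the Chebyshev–Halley method; the methods have cubic convergence.) -/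
/-!
Write `f = (X - r) q`, so that `f' = q + (X - r) q'` and `f'' = 2 q' + (X - r) q''` with
`q(r) = f'(r) ≠ 0`. Substituting these into the Chebyshev–Halley step, the numerator of
`g(z) - r` acquires a factor `(z - r)^2` from `(z - r) f' - f = (z - r)^2 q'` and one more
factor `z - r` because the leading terms `2 q² q'` cancel. Hence `g(z) - r = (z - r)^3 h(z)`
near `r` with `h` analytic at `r`, so `r` is a zero of order at least three of `g - r`.
-/

open Polynomial Filter Topology

theorem iteratedDeriv_eq_zero_of_eventuallyEq_add_pow_smul {𝕜 E : Type*}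
    [NontriviallyNormedField 𝕜] [CharZero 𝕜] [NormedAddCommGroup E] [NormedSpace 𝕜 E]
    [CompleteSpace E] {φ h : 𝕜 → E} {z₀ : 𝕜} {c : E} {n i : ℕ} (hh : AnalyticAt 𝕜 h z₀)
    (hφ : φ =ᶠ[𝓝 z₀] fun z => c + (z - z₀) ^ n • h z) (hi₀ : 0 < i) (hin : i < n) :
    iteratedDeriv i φ z₀ = 0 := by
  have hψ : AnalyticAt 𝕜 (fun z => (z - z₀) ^ n • h z) z₀ := by fun_prop
  have hord : (n : ℕ∞) ≤ analyticOrderAt (fun z => (z - z₀) ^ n • h z) z₀ :=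
    (natCast_le_analyticOrderAt hψ).mpr ⟨h, hh, .of_forall fun _ => rfl⟩
  rw [(hφ.iteratedDeriv i).eq_of_nhds, iteratedDeriv_const_add hi₀]
  exact (natCast_le_analyticOrderAt_iff_iteratedDeriv_eq_zero hψ).mp hord i hin

namespace Polynomial

variable {R : Type*} [CommRing R]

theorem eval_derivative_X_sub_C_mul (q : R[X]) (r z : R) :
    (derivative ((X - C r) * q)).eval z = q.eval z + (z - r) * q.derivative.eval z := by
  simp [derivative_mul]

theorem eval_derivative_derivative_X_sub_C_mul (q : R[X]) (r z : R) :
    (derivative (derivative ((X - C r) * q))).eval z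
      = 2 * q.derivative.eval z + (z - r) * q.derivative.derivative.eval z := by
  simp only [derivative_mul, derivative_sub, derivative_X, derivative_C, sub_zero, one_mul,
    derivative_add, eval_add, eval_mul, eval_sub, eval_X, eval_C]
  ring

end Polynomial

/-- `f₀, f₁, f₂` stand for `f, f', f''` at `z` and `q₀, q₁, q₂` for `q, q', q''` at `z`, where
`f = (X - r) q` and `e = z - r`. -/
theorem sub_chebyshevHalley_eq_pow_three_mul {K : Type*} [Field K] [NeZero (2 : K)]
    (α e q₀ q₁ q₂ f₀ f₁ f₂ : K) (h₀ : f₀ = e * q₀) (h₁ : f₁ = q₀ + e * q₁)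
    (h₂ : f₂ = 2 * q₁ + e * q₂) (hf₁ : f₁ ≠ 0) (hD : f₁ ^ 2 - α * f₀ * f₂ ≠ 0) :
    e - (1 + f₀ * f₂ / f₁ ^ 2 / (2 * (1 - α * (f₀ * f₂ / f₁ ^ 2)))) * (f₀ / f₁)
      = e ^ 3 * ((4 * (1 - α) * q₀ * q₁ ^ 2 - q₀ ^ 2 * q₂ + 2 * e * q₁ * (q₁ ^ 2 - α * q₀ * q₂))
          / (2 * f₁ * (f₁ ^ 2 - α * f₀ * f₂))) := by
  have hL : 1 - α * (f₀ * f₂ / f₁ ^ 2) = (f₁ ^ 2 - α * f₀ * f₂) / f₁ ^ 2 := by field_simp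
  rw [hL]
  -- with the denominator kept atomic, `field_simp` clears it instead of expanding it
  generalize hDdef : f₁ ^ 2 - α * f₀ * f₂ = D at hD ⊢
  field_simp
  rw [← hDdef]
  subst h₀ h₁ h₂
  ring

/-- Every simple root of a polynomial is a super-attracting fixed point of local degree
at least 3 of the Chebyshev–Halley method: `g(r) = r`, `g'(r) = 0` and `g''(r) = 0`. -/
theorem stmt_1 (f : Polynomial ℂ) (r : ℂ) (hr : f.eval r = 0)
    (hr' : f.derivative.eval r ≠ 0) (α : ℂ)
    (L : ℂ → ℂ)
    (hL : ∀ z, L z = f.eval z * f.derivative.derivative.eval z / (f.derivative.eval z)^2)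
    (g : ℂ → ℂ)
    (hg : ∀ z, g z = z - (1 + L z / (2*(1 - α * L z))) * (f.eval z / f.derivative.eval z)) :
    g r = r ∧ deriv g r = 0 ∧ iteratedDeriv 2 g r = 0 := by
  obtain ⟨q, hq⟩ := dvd_iff_isRoot.mpr hr
  set D : ℂ → ℂ := fun z =>
    (f.derivative.eval z) ^ 2 - α * f.eval z * f.derivative.derivative.eval z
  set h : ℂ → ℂ := fun z =>
    (4 * (1 - α) * q.eval z * (q.derivative.eval z) ^ 2
      - (q.eval z) ^ 2 * q.derivative.derivative.eval z
      + 2 * (z - r) * q.derivative.eval z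
        * ((q.derivative.eval z) ^ 2 - α * q.eval z * q.derivative.derivative.eval z))
      / (2 * f.derivative.eval z * D z)
  have hDr : D r ≠ 0 := by simpa [D, hr] using hr'
  have hnear : ∀ᶠ z in 𝓝 r, f.derivative.eval z ≠ 0 ∧ D z ≠ 0 :=
    (f.derivative.continuous.continuousAt.eventually_ne hr').and
      ((show Continuous D by fun_prop).continuousAt.eventually_ne hDr)
  have hfactor : g =ᶠ[𝓝 r] fun z => r + (z - r) ^ 3 • h z := by
    filter_upwards [hnear] with z ⟨hz₁, hzD⟩
    rw [smul_eq_mul, hg, hL]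
    linear_combination sub_chebyshevHalley_eq_pow_three_mul α (z - r)
      (q.eval z) (q.derivative.eval z) (q.derivative.derivative.eval z) _ _ _
      (by simp [hq]) (by rw [hq, eval_derivative_X_sub_C_mul])
      (by rw [hq, eval_derivative_derivative_X_sub_C_mul]) hz₁ hzD
  have hpoly : ∀ p : ℂ[X], AnalyticAt ℂ (fun z => p.eval z) r :=
    fun p => p.differentiable.analyticAt r
  have hh : AnalyticAt ℂ h r := by
    fun_prop (disch := exact mul_ne_zero (mul_ne_zero two_ne_zero hr') hDr)
  refine ⟨by simpa using hfactor.self_of_nhds, ?_, ?_⟩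
  · rw [← iteratedDeriv_one]
    exact iteratedDeriv_eq_zero_of_eventuallyEq_add_pow_smul hh hfactor one_pos (by norm_num)
  · exact iteratedDeriv_eq_zero_of_eventuallyEq_add_pow_smul hh hfactor two_pos (by norm_num)
end

section
/- For every a ∈ ℂ and every z ∈ ℂ with z ≠ 0 and D_a(z) ≠ 0, the derivative of R_a at z equals 0 if and only if z³ = 1 or a·(a+1)·z³ = 15 − 8a + a². (In particular, for a ∉ {0,3} the free critical points of R_a are exactly the three cube roots of (15−8a+a²)/(a(a+1)).) -/
/-- The rational map `R_a` obtained from the Chebyshev–Halley method applied to `z^3-1`. -/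
noncomputable def Ra (a z : ℂ) : ℂ :=
  (2*a*z^6 + (15 - a)*z^3 + (3 - a)) / (3*z^2*(5 - a + (1 + a)*z^3))

/-- The denominator of `R_a`. -/
noncomputable def Da (a z : ℂ) : ℂ := 3*z^2*(5 - a + (1 + a)*z^3)

theorem ne_zero_of_Da_ne_zero {a z : ℂ} (hD : Da a z ≠ 0) : z ≠ 0 := by
  rintro rfl
  simp [Da] at hD

/-- The method converges cubically, so each cube root of unity is a double zero of `R_a'`. -/
theorem hasDerivAt_Ra {a z : ℂ} (hD : Da a z ≠ 0) :
    HasDerivAt (Ra a) (6*z*(z^3 - 1)^2*(a*(a + 1)*z^3 - (15 - 8*a + a^2)) / Da a z ^ 2) z := by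
  have hnum := (((hasDerivAt_pow 6 z).const_mul (2*a)).fun_add
    ((hasDerivAt_pow 3 z).const_mul (15 - a))).add_const (3 - a)
  have hden := ((hasDerivAt_pow 2 z).const_mul 3).fun_mul
    (((hasDerivAt_pow 3 z).const_mul (1 + a)).const_add (5 - a))
  refine (hnum.fun_div hden hD).congr_deriv ?_
  simp only [Da]
  push_cast
  ring

theorem stmt_4_general (a z : ℂ) (hD : Da a z ≠ 0) :
    deriv (Ra a) z = 0 ↔ (z^3 = 1 ∨ a*(a+1)*z^3 = 15 - 8*a + a^2) := by
  rw [(hasDerivAt_Ra hD).deriv, div_eq_zero_iff, or_iff_left (pow_ne_zero 2 hD)]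
  simp [ne_zero_of_Da_ne_zero hD, sub_eq_zero]

/-- For `z ≠ 0` with `D_a(z) ≠ 0`, the derivative of `R_a` vanishes at `z` if and only if
`z³ = 1` or `a(a+1)z³ = 15 - 8a + a²`. -/
theorem stmt_4 (a z : ℂ) (hz : z ≠ 0) (hD : Da a z ≠ 0) :
    deriv (Ra a) z = 0 ↔ (z^3 = 1 ∨ a*(a+1)*z^3 = 15 - 8*a + a^2) :=
  stmt_4_general a z hD
end

section
/- Let a ∈ ℂ with a ≠ 0, a ≠ −1 and a ≠ 5, and let c ∈ ℂ satisfy c³ = (15 − 8a + a²)/(a·(a+1)) and c ≠ 0. Then D_a(c) ≠ 0 and the critical value v = R_a(c) satisfies v³ = a²·(25 − 6a + a²)³·(15 − 8a + a²)/((a−5)⁶·(a+1)⁴). -/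
/-!
With `c³ = (a-3)(a-5)/(a(a+1))` the denominator `D_a(c)` becomes `9c²(5-a)/a`, and the numerator
factors as `-9(a-3)(a²-6a+25)/(a(a+1)²)`, so `R_a(c)·c²` is a rational function of `a` alone.
Cubing it and using `c⁶ = (c³)²` once more gives the critical value.
-/

lemma Da_eq_of_cube {a c : ℂ} (ha0 : a ≠ 0) (ha1 : a ≠ -1)
    (hc : c^3 = (15 - 8*a + a^2)/(a*(a+1))) :
    Da a c = 9*c^2*(5 - a)/a := by
  have ha1' : a + 1 ≠ 0 := mt add_eq_zero_iff_eq_neg.mp ha1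
  rw [Da, hc]
  field_simp
  ring

lemma Da_ne_zero_of_cube {a c : ℂ} (ha0 : a ≠ 0) (ha1 : a ≠ -1) (ha5 : a ≠ 5)
    (hc : c^3 = (15 - 8*a + a^2)/(a*(a+1))) (hc0 : c ≠ 0) :
    Da a c ≠ 0 := by
  rw [Da_eq_of_cube ha0 ha1 hc]
  have h5 : (5:ℂ) - a ≠ 0 := sub_ne_zero.mpr (Ne.symm ha5)
  exact div_ne_zero (mul_ne_zero (mul_ne_zero (by norm_num) (pow_ne_zero 2 hc0)) h5) ha0

lemma Ra_numerator_eq_of_cube {a c : ℂ} (ha0 : a ≠ 0) (ha1 : a ≠ -1)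
    (hc : c^3 = (15 - 8*a + a^2)/(a*(a+1))) :
    2*a*c^6 + (15 - a)*c^3 + (3 - a) = -9*(a - 3)*(25 - 6*a + a^2)/(a*(a+1)^2) := by
  have ha1' : a + 1 ≠ 0 := mt add_eq_zero_iff_eq_neg.mp ha1
  rw [show c^6 = (c^3)^2 by ring, hc]
  field_simp
  ring

lemma Ra_mul_sq_of_cube {a c : ℂ} (ha0 : a ≠ 0) (ha1 : a ≠ -1) (ha5 : a ≠ 5)
    (hc : c^3 = (15 - 8*a + a^2)/(a*(a+1))) (hc0 : c ≠ 0) :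
    Ra a c * c^2 = (a - 3)*(25 - 6*a + a^2)/((a - 5)*(a+1)^2) := by
  have ha1' : a + 1 ≠ 0 := mt add_eq_zero_iff_eq_neg.mp ha1
  change (2*a*c^6 + (15 - a)*c^3 + (3 - a)) / Da a c * c^2 = _
  rw [Ra_numerator_eq_of_cube ha0 ha1 hc, Da_eq_of_cube ha0 ha1 hc]
  field_simp
  ring

/-- For a free critical point `c` of `R_a` (with `a ∉ {0,-1,5}`), `D_a(c) ≠ 0` and the
critical value `v = R_a(c)` satisfies
`v³ = a²(25-6a+a²)³(15-8a+a²)/((a-5)⁶(a+1)⁴)`. -/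
theorem stmt_5 (a c : ℂ) (ha0 : a ≠ 0) (ha1 : a ≠ -1) (ha5 : a ≠ 5)
    (hc : c^3 = (15 - 8*a + a^2)/(a*(a+1))) (hc0 : c ≠ 0) :
    Da a c ≠ 0 ∧
    (Ra a c)^3 = a^2*(25 - 6*a + a^2)^3*(15 - 8*a + a^2)/((a-5)^6*(a+1)^4) := by
  refine ⟨Da_ne_zero_of_cube ha0 ha1 ha5 hc hc0, ?_⟩
  have ha1' : a + 1 ≠ 0 := mt add_eq_zero_iff_eq_neg.mp ha1
  have h5 : a - 5 ≠ 0 := sub_ne_zero.mpr ha5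
  refine mul_right_cancel₀ (pow_ne_zero 6 hc0) ?_
  calc (Ra a c)^3 * c^6 = (Ra a c * c^2)^3 := by ring
    _ = ((a - 3)*(25 - 6*a + a^2)/((a - 5)*(a+1)^2))^3 := by
        rw [Ra_mul_sq_of_cube ha0 ha1 ha5 hc hc0]
    _ = a^2*(25 - 6*a + a^2)^3*(15 - 8*a + a^2)/((a-5)^6*(a+1)^4) * (c^3)^2 := by
        rw [hc]
        field_simp
        ring
    _ = _ := by ring
end

section
/- Let b, λ ∈ ℂ with λ ≠ 0, and define M : ℂ∖{0} → ℂ by M(z) = (z⁶ + b·z³ + λ)/z². If the set C = {z ∈ ℂ : z ≠ 0 and the derivative of M at z is 0} has exactly 6 elements and the image M(C) has exactly 3 elements, then b = 0. -/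
open Set

private lemma cube_set_eq (w : ℂ) :
    {z : ℂ | z^3 = w} = ((Polynomial.nthRoots 3 w).toFinset : Set ℂ) := by
  ext z
  simp [Polynomial.mem_nthRoots (by norm_num : 0 < 3)]

private lemma cube_finite (w : ℂ) : {z : ℂ | z^3 = w}.Finite := by
  rw [cube_set_eq]; exact Finset.finite_toSet _

private lemma cube_ncard (w : ℂ) : {z : ℂ | z^3 = w}.ncard ≤ 3 := by
  rw [cube_set_eq, Set.ncard_coe_finset]
  exact le_trans (Multiset.toFinset_card_le _) (Polynomial.card_nthRoots 3 w)

private lemma ncard_four {a b c d : ℂ} (hab : a ≠ b) (hac : a ≠ c) (had : a ≠ d)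
    (hbc : b ≠ c) (hbd : b ≠ d) (hcd : c ≠ d) :
    ({a, b, c, d} : Set ℂ).ncard = 4 := by
  rw [Set.ncard_insert_of_notMem (by simp [hab, hac, had])
      (((Set.finite_singleton d).insert c).insert b),
    Set.ncard_insert_of_notMem (by simp [hbc, hbd]) ((Set.finite_singleton d).insert c),
    Set.ncard_insert_of_notMem (by simp [hcd]) (Set.finite_singleton d),
    Set.ncard_singleton]

/-- Rigidity of McMullen's family (core step): if `M(z) = (z⁶ + bz³ + λ)/z²` with `λ ≠ 0`
has exactly 6 critical points in `ℂ \ {0}` mapped onto exactly 3 critical values,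
then `b = 0`. -/
theorem stmt_12 (b lam : ℂ) (hlam : lam ≠ 0)
    (M : ℂ → ℂ) (hM : ∀ z, M z = (z^6 + b*z^3 + lam)/z^2)
    (C : Set ℂ) (hC : C = {z : ℂ | z ≠ 0 ∧ deriv M z = 0})
    (h6 : C.ncard = 6) (h3 : (M '' C).ncard = 3) :
    b = 0 := by
  obtain ⟨d, hd⟩ : ∃ d : ℂ, d^2 = b^2 + 32*lam :=
    IsAlgClosed.exists_pow_nat_eq _ zero_lt_two
  set w₁ : ℂ := (-b + d)/8 with hw1
  set w₂ : ℂ := (-b - d)/8 with hw2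
  have hfac : ∀ z : ℂ, 4*z^6 + b*z^3 - 2*lam = 4*(z^3 - w₁)*(z^3 - w₂) := by
    intro z
    rw [hw1, hw2]
    linear_combination (1/16 : ℂ) * hd
  have hMeq : M = fun z : ℂ => (z^6 + b*z^3 + lam)/z^2 := funext hM
  have hderiv : ∀ z : ℂ, z ≠ 0 →
      deriv M z = (z * (4*z^6 + b*z^3 - 2*lam)) / (z^2)^2 := by
    intro z hz
    have hz2 : z^2 ≠ 0 := pow_ne_zero _ hz
    have h1 : HasDerivAt (fun z : ℂ => z^6 + b*z^3 + lam) (6*z^5 + b*(3*z^2)) z := by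
      simpa using ((hasDerivAt_pow 6 z).add ((hasDerivAt_pow 3 z).const_mul b)).add_const lam
    have h2 : HasDerivAt (fun z : ℂ => z^2) (2*z) z := by
      simpa using hasDerivAt_pow 2 z
    have hM' : HasDerivAt M
        (((6*z^5 + b*(3*z^2)) * z^2 - (z^6 + b*z^3 + lam) * (2*z)) / (z^2)^2) z := by
      rw [hMeq]; exact h1.div h2 hz2
    rw [hM'.deriv]; ring
  have hCmem : ∀ z : ℂ, z ∈ C ↔ (z ≠ 0 ∧ (z^3 = w₁ ∨ z^3 = w₂)) := by
    intro z
    rw [hC, Set.mem_setOf_eq]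
    constructor
    · rintro ⟨hz, hdz⟩
      refine ⟨hz, ?_⟩
      rw [hderiv z hz, div_eq_zero_iff] at hdz
      rcases hdz with h | h
      · have h' : 4*z^6 + b*z^3 - 2*lam = 0 :=
          (mul_eq_zero.1 h).resolve_left hz
        rw [hfac z] at h'
        rcases mul_eq_zero.1 h' with h'' | h''
        · rcases mul_eq_zero.1 h'' with h''' | h'''
          · norm_num at h'''
          · exact Or.inl (sub_eq_zero.1 h''')
        · exact Or.inr (sub_eq_zero.1 h'')
      · exact absurd h (pow_ne_zero _ (pow_ne_zero _ hz))
    · rintro ⟨hz, hw⟩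
      refine ⟨hz, ?_⟩
      rw [hderiv z hz]
      apply div_eq_zero_iff.2
      left
      rw [hfac z]
      rcases hw with h | h <;> rw [h] <;> ring
  have hq1 : 4*w₁^2 + b*w₁ - 2*lam = 0 := by
    rw [hw1]; linear_combination (1/16 : ℂ) * hd
  have hq2 : 4*w₂^2 + b*w₂ - 2*lam = 0 := by
    rw [hw2]; linear_combination (1/16 : ℂ) * hd
  have hw1ne : w₁ ≠ 0 := by
    intro h
    apply hlam
    rw [h] at hq1
    linear_combination (-1/2 : ℂ) * hq1
  have hw2ne : w₂ ≠ 0 := by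
    intro h
    apply hlam
    rw [h] at hq2
    linear_combination (-1/2 : ℂ) * hq2
  have hdne : d ≠ 0 := by
    intro h0
    have hsub : C ⊆ {z : ℂ | z^3 = w₁} := by
      intro z hz
      rcases (hCmem z).1 hz with ⟨_, h | h⟩
      · exact h
      · have hww : w₂ = w₁ := by rw [hw1, hw2, h0]; ring
        show z^3 = w₁
        rw [← hww]; exact h
    have hle := Set.ncard_le_ncard hsub (cube_finite w₁)
    rw [h6] at hle
    have := hle.trans (cube_ncard w₁)
    norm_num at this
  obtain ⟨z₁, hz1⟩ : ∃ z : ℂ, z^3 = w₁ :=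
    IsAlgClosed.exists_pow_nat_eq w₁ (by norm_num)
  obtain ⟨z₂, hz2⟩ : ∃ z : ℂ, z^3 = w₂ :=
    IsAlgClosed.exists_pow_nat_eq w₂ (by norm_num)
  have hz1ne : z₁ ≠ 0 := by
    intro h; apply hw1ne; rw [← hz1, h]; ring
  have hz2ne : z₂ ≠ 0 := by
    intro h; apply hw2ne; rw [← hz2, h]; ring
  obtain ⟨ω, hω3, hωs⟩ : ∃ ω : ℂ, ω^3 = 1 ∧ ω^2 + ω + 1 = 0 := by
    obtain ⟨ω, hω⟩ : ∃ ω : ℂ, IsPrimitiveRoot ω 3 :=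
      ⟨_, Complex.isPrimitiveRoot_exp 3 (by norm_num)⟩
    have hh3 : ω^3 = 1 := hω.pow_eq_one
    have hh1 : ω ≠ 1 := hω.ne_one (by norm_num)
    have hh2 : (ω - 1) * (ω^2 + ω + 1) = 0 := by linear_combination hh3
    exact ⟨ω, hh3, (mul_eq_zero.1 hh2).resolve_left (sub_ne_zero.2 hh1)⟩
  have hωne0 : ω ≠ 0 := by
    intro h; rw [h] at hω3; norm_num at hω3
  have hωne1 : ω ≠ 1 := by
    intro h; rw [h] at hωs; norm_num at hωs
  have hω2ne1 : ω^2 ≠ 1 := by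
    intro h
    apply hωne1
    linear_combination hω3 - ω*h
  have hval : ∀ z : ℂ, z ≠ 0 → (z^3 = w₁ ∨ z^3 = w₂) → M z = 3*z^4 + 3/2*b*z := by
    intro z hz hw
    have hp : 4*z^6 + b*z^3 - 2*lam = 0 := by
      rw [hfac]; rcases hw with h | h <;> rw [h] <;> ring
    rw [hM z, div_eq_iff (pow_ne_zero 2 hz)]
    linear_combination (-1/2 : ℂ) * hp
  have hmem : ∀ u z : ℂ, u^3 = 1 → (z^3 = w₁ ∨ z^3 = w₂) → z ≠ 0 →
      u*z ∈ C ∧ M (u*z) = u*(3*z^4 + 3/2*b*z) := by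
    intro u z hu hw hz
    have hune : u ≠ 0 := by intro h; rw [h] at hu; norm_num at hu
    have huz : u*z ≠ 0 := mul_ne_zero hune hz
    have hw' : (u*z)^3 = w₁ ∨ (u*z)^3 = w₂ := by
      rw [mul_pow, hu, one_mul]; exact hw
    refine ⟨(hCmem _).2 ⟨huz, hw'⟩, ?_⟩
    rw [hval _ huz hw']
    linear_combination (3*u*z^4) * hu
  set v₁ : ℂ := 3*z₁^4 + 3/2*b*z₁ with hv1
  set v₂ : ℂ := 3*z₂^4 + 3/2*b*z₂ with hv2
  have himg : ∀ u : ℂ, u^3 = 1 → u*v₁ ∈ M '' C ∧ u*v₂ ∈ M '' C := by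
    intro u hu
    exact ⟨⟨u*z₁, (hmem u z₁ hu (Or.inl hz1) hz1ne).1, (hmem u z₁ hu (Or.inl hz1) hz1ne).2⟩,
      ⟨u*z₂, (hmem u z₂ hu (Or.inr hz2) hz2ne).1, (hmem u z₂ hu (Or.inr hz2) hz2ne).2⟩⟩
  have himg1 : v₁ ∈ M '' C := by
    have := (himg 1 (by norm_num)).1; rwa [one_mul] at this
  have himg2 : v₂ ∈ M '' C := by
    have := (himg 1 (by norm_num)).2; rwa [one_mul] at this
  have hω2cube : (ω^2)^3 = 1 := by linear_combination (ω^3 + 1)*hω3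
  have hCfin : C.Finite := by
    apply Set.Finite.subset ((cube_finite w₁).union (cube_finite w₂))
    intro z hz
    rcases (hCmem z).1 hz with ⟨_, h | h⟩
    · exact Or.inl h
    · exact Or.inr h
  have hMCfin : (M '' C).Finite := hCfin.image M
  have hcancel : ∀ x u u' : ℂ, x ≠ 0 → u*x = u'*x → u = u' := by
    intro x u u' hx h
    exact mul_right_cancel₀ hx h
  have hv3 : v₁^3 = v₂^3 := by
    by_contra hne
    have habs : ∀ s : Set ℂ, s ⊆ M '' C → s.ncard = 4 → False := by
      intro s hsub hcard
      have := Set.ncard_le_ncard hsub hMCfin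
      rw [hcard, h3] at this
      norm_num at this
    rcases eq_or_ne v₁ 0 with h1 | h1
    · have h2 : v₂ ≠ 0 := by
        intro h; apply hne; rw [h1, h]
      refine habs {v₁, v₂, ω*v₂, ω^2*v₂} ?_ ?_
      · intro x hx
        simp only [Set.mem_insert_iff, Set.mem_singleton_iff] at hx
        rcases hx with rfl | rfl | rfl | rfl
        · exact himg1
        · exact himg2
        · exact (himg ω hω3).2
        · exact (himg (ω^2) hω2cube).2
      · refine ncard_four ?_ ?_ ?_ ?_ ?_ ?_
        · rw [h1]; exact Ne.symm h2
        · rw [h1]; exact Ne.symm (mul_ne_zero hωne0 h2)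
        · rw [h1]; exact Ne.symm (mul_ne_zero (pow_ne_zero 2 hωne0) h2)
        · intro h
          exact hωne1 (hcancel v₂ ω 1 h2 (by rw [one_mul]; exact h.symm))
        · intro h
          exact hω2ne1 (hcancel v₂ (ω^2) 1 h2 (by rw [one_mul]; exact h.symm))
        · intro h
          have heq := hcancel v₂ ω (ω^2) h2 h
          have h0 : ω*(ω - 1) = 0 := by linear_combination -heq
          rcases mul_eq_zero.1 h0 with h' | h'
          · exact hωne0 h'
          · exact hωne1 (sub_eq_zero.1 h')
    · rcases eq_or_ne v₂ 0 with h2 | h2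
      · refine habs {v₂, v₁, ω*v₁, ω^2*v₁} ?_ ?_
        · intro x hx
          simp only [Set.mem_insert_iff, Set.mem_singleton_iff] at hx
          rcases hx with rfl | rfl | rfl | rfl
          · exact himg2
          · exact himg1
          · exact (himg ω hω3).1
          · exact (himg (ω^2) hω2cube).1
        · refine ncard_four ?_ ?_ ?_ ?_ ?_ ?_
          · rw [h2]; exact Ne.symm h1
          · rw [h2]; exact Ne.symm (mul_ne_zero hωne0 h1)
          · rw [h2]; exact Ne.symm (mul_ne_zero (pow_ne_zero 2 hωne0) h1)
          · intro h
            exact hωne1 (hcancel v₁ ω 1 h1 (by rw [one_mul]; exact h.symm))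
          · intro h
            exact hω2ne1 (hcancel v₁ (ω^2) 1 h1 (by rw [one_mul]; exact h.symm))
          · intro h
            have heq := hcancel v₁ ω (ω^2) h1 h
            have h0 : ω*(ω - 1) = 0 := by linear_combination -heq
            rcases mul_eq_zero.1 h0 with h' | h'
            · exact hωne0 h'
            · exact hωne1 (sub_eq_zero.1 h')
      · refine habs {v₁, ω*v₁, v₂, ω*v₂} ?_ ?_
        · intro x hx
          simp only [Set.mem_insert_iff, Set.mem_singleton_iff] at hx
          rcases hx with rfl | rfl | rfl | rfl
          · exact himg1
          · exact (himg ω hω3).1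
          · exact himg2
          · exact (himg ω hω3).2
        · refine ncard_four ?_ ?_ ?_ ?_ ?_ ?_
          · intro h
            exact hωne1 (hcancel v₁ ω 1 h1 (by rw [one_mul]; exact h.symm))
          · intro h
            exact hne (by rw [h])
          · intro h
            apply hne
            rw [h]
            linear_combination v₂^3 * hω3
          · intro h
            apply hne
            rw [← h]
            linear_combination -v₁^3 * hω3
          · intro h
            apply hne
            rw [mul_left_cancel₀ hωne0 h]
          · intro h
            exact hωne1 (hcancel v₂ ω 1 h2 (by rw [one_mul]; exact h.symm))
  have e1 : w₁*(3*w₁ + 3/2*b)^3 = w₂*(3*w₂ + 3/2*b)^3 := by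
    calc w₁*(3*w₁ + 3/2*b)^3 = v₁^3 := by rw [hv1, ← hz1]; ring
      _ = v₂^3 := hv3
      _ = w₂*(3*w₂ + 3/2*b)^3 := by rw [hv2, ← hz2]; ring
  rw [hw1, hw2] at e1
  have hbd3 : b*d^3 = 0 := by linear_combination (256/27 : ℂ) * e1
  exact (mul_eq_zero.1 hbd3).resolve_right (pow_ne_zero 3 hdne)
end

section
/- Let a, b, λ ∈ ℂ with a ≠ 0 and λ ≠ 0, and define Q : ℂ∖{0} → ℂ by Q(z) = (a·z⁶ + b·z³ + λ)/z². Assume the set C = {z ∈ ℂ : z ≠ 0 and the derivative of Q at z is 0} has exactly 6 elements and the image Q(C) has exactly 3 elements. Then b = 0, and for every s ∈ ℂ with a·s³ = 1 and every z ∈ ℂ with z ≠ 0, one has Q(s·z)/s = z⁴ + (a·λ)/z². (Q is linearly conjugate to a map of the McMullen family M_μ(z) = z⁴ + μ/z², with μ = a·λ.) -/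
/-!
`Q'(z) = (4az⁶ + bz³ - 2λ)/z³`, so the critical points are the cube roots of the two roots
`w₁, w₂` of `4aw² + bw - 2λ`, and having six of them forces `w₁ ≠ w₂`. Since `Q(ξz) = ξQ(z)` for
`ξ³ = 1`, the critical values are the cube roots of `Q(c₁)³` and `Q(c₂)³` (`cᵢ³ = wᵢ`), and having
only three of them forces `Q(c₁)³ = Q(c₂)³`. As `Q(z)³ = (aw² + bw + λ)³/w²` with `w = z³`,
Vieta's formulas turn this into `a³w₁²w₂²(w₁ - w₂)³(w₁ + w₂) = 0`, so `b = -4a(w₁ + w₂) = 0`.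
-/

open Polynomial

section PowFibers

variable {R : Type*} [CommRing R] [IsDomain R] {n : ℕ} {ζ : R}

theorem IsPrimitiveRoot.pow_eq_pow_iff (hζ : IsPrimitiveRoot ζ n) (hn : 0 < n) {z α : R} :
    z ^ n = α ^ n ↔ ∃ i < n, ζ ^ i * α = z := by
  rw [← mem_nthRoots hn, hζ.nthRoots_eq rfl]
  simp

theorem finite_setOf_pow_eq (hn : 0 < n) (a : R) : {z : R | z ^ n = a}.Finite := by
  rw [← nthRootsFinset_toSet hn]
  exact Finset.finite_toSet _

theorem IsPrimitiveRoot.ncard_setOf_pow_eq (hζ : IsPrimitiveRoot ζ n) (hn : 0 < n) {α a : R}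
    (hα : α ^ n = a) (ha : a ≠ 0) : {z : R | z ^ n = a}.ncard = n := by
  classical
  rw [← nthRootsFinset_toSet hn, Set.ncard_coe_finset, nthRootsFinset_def,
    Multiset.toFinset_card_of_nodup (hζ.nthRoots_nodup ha), hζ.nthRoots_eq hα,
    Multiset.card_map, Multiset.card_range]

end PowFibers

theorem IsPrimitiveRoot.lt_ncard_union_setOf_pow_eq {K : Type*} [Field K] [IsAlgClosed K] {n : ℕ}
    {ζ : K} (hζ : IsPrimitiveRoot ζ n) (hn : 0 < n) {u v : K} (huv : u ≠ v) :
    n < ({z : K | z ^ n = u} ∪ {z | z ^ n = v}).ncard := by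
  wlog hu : u ≠ 0 generalizing u v
  · rw [Set.union_comm]
    exact this huv.symm (by rintro rfl; exact huv (not_not.1 hu))
  obtain ⟨α, hα⟩ := IsAlgClosed.exists_pow_nat_eq u hn
  obtain ⟨β, hβ⟩ := IsAlgClosed.exists_pow_nat_eq v hn
  have hβu : β ∉ {z : K | z ^ n = u} := fun h => huv (h.symm.trans hβ)
  calc n = {z : K | z ^ n = u}.ncard := (hζ.ncard_setOf_pow_eq hn hα hu).symm
    _ < (insert β {z : K | z ^ n = u}).ncard := by
      rw [Set.ncard_insert_of_notMem hβu (finite_setOf_pow_eq hn u)]; omega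
    _ ≤ _ := by
      refine Set.ncard_le_ncard ?_ ((finite_setOf_pow_eq hn u).union (finite_setOf_pow_eq hn v))
      exact Set.insert_subset (Or.inr hβ) Set.subset_union_left

theorem exists_vieta_of_isAlgClosed {K : Type*} [Field K] [IsAlgClosed K] {a : K} (ha : a ≠ 0)
    (b c : K) : ∃ r s, a * (r + s) = -b ∧ a * (r * s) = c := by
  obtain ⟨r, hr⟩ := IsAlgClosed.exists_root (C a * X ^ 2 + C b * X + C c)
    (by rw [degree_quadratic ha]; decide)
  simp only [IsRoot, eval_add, eval_mul, eval_C, eval_pow, eval_X] at hr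
  refine ⟨r, -b / a - r, ?_, ?_⟩
  · field_simp; ring
  · field_simp; linear_combination -hr

noncomputable def ratMap (a b lam z : ℂ) : ℂ := (a * z ^ 6 + b * z ^ 3 + lam) / z ^ 2

section RatMap

variable {a b lam : ℂ}

theorem ratMap_mul_of_pow_three_eq_one {ξ : ℂ} (hξ : ξ ^ 3 = 1) (z : ℂ) :
    ratMap a b lam (ξ * z) = ξ * ratMap a b lam z := by
  have hξ0 : ξ ≠ 0 := by rintro rfl; norm_num at hξ
  rcases eq_or_ne z 0 with rfl | hz
  · simp [ratMap]
  unfold ratMap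
  field_simp
  linear_combination (a * z ^ 6 * ξ ^ 3 - lam) * hξ

theorem ratMap_pow_three (z : ℂ) :
    ratMap a b lam z ^ 3 = (a * (z ^ 3) ^ 2 + b * z ^ 3 + lam) ^ 3 / (z ^ 3) ^ 2 := by
  unfold ratMap
  ring

theorem image_ratMap_setOf_pow_three_eq {ξ : ℂ} (hξ : IsPrimitiveRoot ξ 3) {c w : ℂ}
    (hc : c ^ 3 = w) :
    ratMap a b lam '' {z | z ^ 3 = w} = {v | v ^ 3 = ratMap a b lam c ^ 3} := by
  have hξi (i : ℕ) : (ξ ^ i) ^ 3 = 1 := by rw [← pow_mul, mul_comm, pow_mul, hξ.pow_eq_one, one_pow]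
  ext v
  simp only [Set.mem_image, Set.mem_ofPred_eq]
  constructor
  · rintro ⟨z, hz, rfl⟩
    obtain ⟨i, -, rfl⟩ := (hξ.pow_eq_pow_iff three_pos).1 (hz.trans hc.symm)
    rw [ratMap_mul_of_pow_three_eq_one (hξi i), mul_pow, hξi, one_mul]
  · intro hv
    obtain ⟨i, -, rfl⟩ := (hξ.pow_eq_pow_iff three_pos).1 hv
    exact ⟨ξ ^ i * c, by rw [mul_pow, hξi, one_mul, hc], ratMap_mul_of_pow_three_eq_one (hξi i) c⟩

theorem hasDerivAt_ratMap {z : ℂ} (hz : z ≠ 0) :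
    HasDerivAt (ratMap a b lam) ((4 * a * z ^ 6 + b * z ^ 3 - 2 * lam) / z ^ 3) z := by
  have hnum : HasDerivAt (fun z : ℂ => a * z ^ 6 + b * z ^ 3 + lam)
      (a * (6 * z ^ 5) + b * (3 * z ^ 2)) z := by
    have h6 := (hasDerivAt_pow 6 z).const_mul a
    have h3 := (hasDerivAt_pow 3 z).const_mul b
    simpa using (h6.add h3).add_const lam
  have hden : HasDerivAt (fun z : ℂ => z ^ 2) (2 * z) z := by simpa using hasDerivAt_pow 2 z
  refine (hnum.div hden (pow_ne_zero 2 hz)).congr_deriv ?_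
  field_simp
  ring

theorem setOf_deriv_ratMap_eq_zero (ha : a ≠ 0) (hlam : lam ≠ 0) {w₁ w₂ : ℂ}
    (hsum : 4 * a * (w₁ + w₂) = -b) (hprod : 4 * a * (w₁ * w₂) = -2 * lam) :
    {z | z ≠ 0 ∧ deriv (ratMap a b lam) z = 0} = {z | z ^ 3 = w₁} ∪ {z | z ^ 3 = w₂} := by
  have hfactor (z : ℂ) :
      4 * a * z ^ 6 + b * z ^ 3 - 2 * lam = 4 * a * (z ^ 3 - w₁) * (z ^ 3 - w₂) := by
    linear_combination z ^ 3 * hsum - hprod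
  have hw (z : ℂ) (h : z ^ 3 = w₁ ∨ z ^ 3 = w₂) : z ≠ 0 := by
    rintro rfl
    apply hlam
    rcases h with h | h <;> rw [← h] at hprod <;> linear_combination hprod / 2
  ext z
  simp only [Set.mem_ofPred_eq, Set.mem_union]
  constructor
  · rintro ⟨hz, hdz⟩
    rw [(hasDerivAt_ratMap hz).deriv, hfactor] at hdz
    simpa [ha, hz, sub_eq_zero] using hdz
  · intro h
    refine ⟨hw z h, ?_⟩
    rw [(hasDerivAt_ratMap (hw z h)).deriv, hfactor]
    rcases h with h | h <;> simp [h]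

theorem eq_zero_of_cube_critical_values_eq (ha : a ≠ 0) {w₁ w₂ : ℂ} (hw₁ : w₁ ≠ 0) (hw₂ : w₂ ≠ 0)
    (hne : w₁ ≠ w₂) (hsum : 4 * a * (w₁ + w₂) = -b) (hprod : 4 * a * (w₁ * w₂) = -2 * lam)
    (h : (a * w₁ ^ 2 + b * w₁ + lam) ^ 3 / w₁ ^ 2 = (a * w₂ ^ 2 + b * w₂ + lam) ^ 3 / w₂ ^ 2) :
    b = 0 := by
  have hb : b = -4 * a * (w₁ + w₂) := by linear_combination hsum
  have hl : lam = -2 * a * (w₁ * w₂) := by linear_combination hprod / 2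
  subst hb hl
  rw [div_eq_div_iff (pow_ne_zero 2 hw₁) (pow_ne_zero 2 hw₂)] at h
  have hfactor : a ^ 3 * w₁ ^ 2 * w₂ ^ 2 * (w₁ - w₂) ^ 3 ≠ 0 := by
    simp [ha, hw₁, hw₂, sub_eq_zero, hne]
  have hsum0 : w₁ + w₂ = 0 := by
    refine (mul_eq_zero.1 ?_).resolve_left hfactor
    linear_combination -h / 27
  linear_combination -4 * a * hsum0

theorem ratMap_mul_div_eq {s : ℂ} (hs : a * s ^ 3 = 1) (z : ℂ) :
    ratMap a 0 lam (s * z) / s = z ^ 4 + a * lam / z ^ 2 := by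
  have hs0 : s ≠ 0 := by rintro rfl; simp at hs
  rcases eq_or_ne z 0 with rfl | hz
  · simp [ratMap]
  unfold ratMap
  field_simp
  linear_combination (z ^ 6 * s ^ 3 - lam) * hs

end RatMap

/-- Rigidity of McMullen's family: a degree 6 rational map
`Q(z) = (az⁶ + bz³ + λ)/z²` (with `aλ ≠ 0`) having exactly 6 critical points in `ℂ \ {0}`
mapped onto exactly 3 critical values satisfies `b = 0` and is linearly conjugate to the
McMullen map `M_μ(z) = z⁴ + μ/z²` with `μ = aλ`. -/
theorem stmt_13 (a b lam : ℂ) (ha : a ≠ 0) (hlam : lam ≠ 0)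
    (Q : ℂ → ℂ) (hQ : ∀ z, Q z = (a*z^6 + b*z^3 + lam)/z^2)
    (C : Set ℂ) (hC : C = {z : ℂ | z ≠ 0 ∧ deriv Q z = 0})
    (h6 : C.ncard = 6) (h3 : (Q '' C).ncard = 3) :
    b = 0 ∧ ∀ s : ℂ, a*s^3 = 1 → ∀ z : ℂ, z ≠ 0 →
      Q (s*z) / s = z^4 + (a*lam)/z^2 := by
  obtain rfl : Q = ratMap a b lam := funext hQ
  have hξ := Complex.isPrimitiveRoot_exp 3 three_ne_zero
  obtain ⟨w₁, w₂, hsum, hprod⟩ :=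
    exists_vieta_of_isAlgClosed (mul_ne_zero (by norm_num : (4 : ℂ) ≠ 0) ha) b (-2 * lam)
  obtain ⟨hw₁, hw₂⟩ : w₁ ≠ 0 ∧ w₂ ≠ 0 :=
    mul_ne_zero_iff.1 fun h => hlam (by simpa [h] using hprod.symm)
  obtain ⟨c₁, hc₁⟩ := IsAlgClosed.exists_pow_nat_eq w₁ three_pos
  obtain ⟨c₂, hc₂⟩ := IsAlgClosed.exists_pow_nat_eq w₂ three_pos
  rw [setOf_deriv_ratMap_eq_zero ha hlam hsum hprod] at hC
  subst hC
  have hne : w₁ ≠ w₂ := by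
    rintro rfl
    rw [Set.union_self, hξ.ncard_setOf_pow_eq three_pos hc₁ hw₁] at h6
    norm_num at h6
  rw [Set.image_union, image_ratMap_setOf_pow_three_eq hξ hc₁,
    image_ratMap_setOf_pow_three_eq hξ hc₂] at h3
  have hcube : ratMap a b lam c₁ ^ 3 = ratMap a b lam c₂ ^ 3 := by
    by_contra h
    exact (hξ.lt_ncard_union_setOf_pow_eq three_pos h).ne' h3
  rw [ratMap_pow_three, ratMap_pow_three, hc₁, hc₂] at hcube
  obtain rfl := eq_zero_of_cube_critical_values_eq ha hw₁ hw₂ hne hsum hprod hcube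
  exact ⟨rfl, fun s hs z _ => ratMap_mul_div_eq hs z⟩
end

section
/- There exist constants C₁ > 0 and δ > 0 such that for every a ∈ ℂ with 0 < |a| ≤ δ and every z ∈ ℂ with 1 ≤ |a|^{1/3}·|z| ≤ 3, one has D_a(z) ≠ 0 and |R_a(z)| < C₁·|a|^{2/3}. -/
theorem norm_Ra_numerator_le (a z : ℂ) :
    ‖2*a*z^6 + (15 - a)*z^3 + (3 - a)‖ ≤ 2*‖a‖*‖z‖^6 + (15 + ‖a‖)*‖z‖^3 + (3 + ‖a‖) := by
  have h15 : ‖15 - a‖ ≤ 15 + ‖a‖ := by simpa using norm_sub_le (15 : ℂ) a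
  have h3 : ‖3 - a‖ ≤ 3 + ‖a‖ := by simpa using norm_sub_le (3 : ℂ) a
  calc _ ≤ ‖2*a*z^6‖ + ‖(15 - a)*z^3‖ + ‖3 - a‖ := norm_add₃_le
    _ ≤ _ := by simp only [norm_mul, norm_pow, Complex.norm_ofNat]; gcongr

theorem norm_mul_norm_Ra_numerator_le {a z : ℂ} (ha : ‖a‖ ≤ 1) (hz : ‖a‖ * ‖z‖^3 ≤ 27) :
    ‖a‖ * ‖2*a*z^6 + (15 - a)*z^3 + (3 - a)‖ ≤ 1894 := by
  have hX : 0 ≤ ‖a‖ * ‖z‖^3 := by positivity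
  calc _ ≤ ‖a‖ * (2*‖a‖*‖z‖^6 + (15 + ‖a‖)*‖z‖^3 + (3 + ‖a‖)) := by
        gcongr; exact norm_Ra_numerator_le a z
    _ = 2*(‖a‖ * ‖z‖^3)^2 + (15 + ‖a‖)*(‖a‖ * ‖z‖^3) + ‖a‖*(3 + ‖a‖) := by ring
    _ ≤ 1894 := by nlinarith [norm_nonneg a]

theorem norm_sub_le_norm_cubicFactor (a z : ℂ) :
    (1 - ‖a‖) * ‖z‖^3 - (5 + ‖a‖) ≤ ‖5 - a + (1 + a)*z^3‖ := by
  have h1 : 1 - ‖a‖ ≤ ‖1 + a‖ := by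
    have := norm_sub_le (1 + a) a
    simp only [add_sub_cancel_right, norm_one] at this
    linarith
  have h5 : ‖a - 5‖ ≤ 5 + ‖a‖ := by simpa [add_comm] using norm_sub_le a 5
  calc _ ≤ ‖(1 + a)*z^3‖ - ‖a - 5‖ := by rw [norm_mul, norm_pow]; gcongr
    _ ≤ ‖(1 + a)*z^3 - (a - 5)‖ := norm_sub_norm_le _ _
    _ = _ := by ring_nf

theorem one_le_two_mul_norm_mul_norm_cubicFactor {a z : ℂ} (ha : ‖a‖ ≤ 1/14)
    (hz : 1 ≤ ‖a‖ * ‖z‖^3) : 1 ≤ 2 * ‖a‖ * ‖5 - a + (1 + a)*z^3‖ := by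
  have hF := norm_sub_le_norm_cubicFactor a z
  have := mul_le_mul_of_nonneg_left hF (norm_nonneg a)
  nlinarith [norm_nonneg a]

theorem norm_Da (a z : ℂ) : ‖Da a z‖ = 3 * ‖z‖^2 * ‖5 - a + (1 + a)*z^3‖ := by
  simp [Da, norm_pow]

theorem Da_ne_zero {a z : ℂ} (ha : ‖a‖ ≤ 1/14) (hz : 1 ≤ ‖a‖ * ‖z‖^3) : Da a z ≠ 0 := by
  have hF := one_le_two_mul_norm_mul_norm_cubicFactor ha hz
  have hz0 : z ≠ 0 := by rintro rfl; norm_num at hz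
  rw [← norm_pos_iff, norm_Da]
  have : 0 < ‖5 - a + (1 + a)*z^3‖ := by nlinarith [norm_nonneg a]
  positivity

theorem norm_Ra_mul_sq_lt {a z : ℂ} (ha : ‖a‖ ≤ 1/14) (hz₁ : 1 ≤ ‖a‖ * ‖z‖^3)
    (hz₂₇ : ‖a‖ * ‖z‖^3 ≤ 27) : ‖Ra a z‖ * ‖z‖^2 < 1300 := by
  have hN := norm_mul_norm_Ra_numerator_le (ha.trans (by norm_num)) hz₂₇
  have hF := one_le_two_mul_norm_mul_norm_cubicFactor ha hz₁
  have hD : 0 < ‖Da a z‖ := norm_pos_iff.2 (Da_ne_zero ha hz₁)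
  have hRa : ‖Ra a z‖ * ‖Da a z‖ = ‖2*a*z^6 + (15 - a)*z^3 + (3 - a)‖ := by
    rw [show Ra a z = _ / Da a z from rfl, norm_div, div_mul_cancel₀ _ hD.ne']
  have hscaled : ‖Ra a z‖ * ‖z‖^2 * (3 * (2 * ‖a‖ * ‖5 - a + (1 + a)*z^3‖))
      = 2 * (‖a‖ * ‖2*a*z^6 + (15 - a)*z^3 + (3 - a)‖) := by
    rw [← hRa, norm_Da]; ring
  nlinarith [mul_nonneg (norm_nonneg (Ra a z)) (sq_nonneg ‖z‖)]

/-- There is a constant `C₁ > 0`, independent of `a`, such that for `|a|` small enough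
(`a ≠ 0`) one has `|R_a(z)| < C₁|a|^{2/3}` on the annulus `1/|a|^{1/3} ≤ |z| ≤ 3/|a|^{1/3}`. -/
theorem stmt_14 :
    ∃ C₁ > (0:ℝ), ∃ δ > (0:ℝ), ∀ a : ℂ, 0 < ‖a‖ → ‖a‖ ≤ δ →
      ∀ z : ℂ, 1 ≤ ‖a‖ ^ ((1:ℝ)/3) * ‖z‖ →
        ‖a‖ ^ ((1:ℝ)/3) * ‖z‖ ≤ 3 →
        Da a z ≠ 0 ∧ ‖Ra a z‖ < C₁ * ‖a‖ ^ ((2:ℝ)/3) := by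
  refine ⟨1300, by norm_num, 1/14, by norm_num, fun a _ ha z h₁ h₃ => ?_⟩
  set t := ‖a‖ ^ ((1:ℝ)/3)
  have ht₃ : t^3 = ‖a‖ := by
    rw [← Real.rpow_natCast, ← Real.rpow_mul (norm_nonneg a)]; norm_num
  have ht₂ : ‖a‖ ^ ((2:ℝ)/3) = t^2 := by
    rw [← Real.rpow_natCast, ← Real.rpow_mul (norm_nonneg a)]; norm_num
  have hz₁ : 1 ≤ ‖a‖ * ‖z‖^3 := by
    have := pow_le_pow_left₀ zero_le_one h₁ 3
    rw [mul_pow, ht₃] at this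
    linarith
  have hz₂₇ : ‖a‖ * ‖z‖^3 ≤ 27 := by
    have := pow_le_pow_left₀ (by positivity) h₃ 3
    rw [mul_pow, ht₃] at this
    linarith
  refine ⟨Da_ne_zero ha hz₁, ?_⟩
  calc ‖Ra a z‖ ≤ ‖Ra a z‖ * (t * ‖z‖)^2 :=
        le_mul_of_one_le_right (norm_nonneg _) (one_le_pow₀ h₁)
    _ = ‖Ra a z‖ * ‖z‖^2 * t^2 := by ring
    _ < 1300 * ‖a‖ ^ ((2:ℝ)/3) := by
      rw [ht₂]; gcongr; exact norm_Ra_mul_sq_lt ha hz₁ hz₂₇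
end
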